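/- Variation of the Newtonian kinetic energy (Eq. AdTN): Let E_kin(λ) := ∫ (1/2) ρ(λ) |v(λ)|² dV. Assume that ρ(λ) vanishes outside a fixed compact set for all λ in a neighborhood of 0, and that differentiation under the integral sign at λ = 0 is justified by an integrable dominating bound for the λ-derivatives of the integrands. Then the λ-derivative of E_kin at λ = 0 equals ∫ ρ v^i Δv_i dV + ∫ (1/2)|v|² (δρ + ∂_j(ρ ξ^j)) dV + ∫ [ ξ^j v_j ∂_i(ρ v^i) + ρ ξ^j v^i ∂_i v_j ] dV. -/

import Mathlib

noncomputable section
open MeasureTheory Filter Topology Real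

abbrev E3 := EuclideanSpace ℝ (Fin 3)

/-- Partial derivative in the `i`-th coordinate direction. -/
noncomputable def pd (i : Fin 3) (f : E3 → ℝ) (x : E3) : ℝ :=
  fderiv ℝ f x (EuclideanSpace.single i 1)

/-- Flat Laplacian on `ℝ³`. -/
noncomputable def lap (f : E3 → ℝ) (x : E3) : ℝ := ∑ i, pd i (fun y => pd i f y) x

/-- Surface integral over the sphere of radius `r` (centered at the origin) of the outward
normal component of the vector field with components `F · i`. -/
noncomputable def flux (F : E3 → Fin 3 → ℝ) (r : ℝ) : ℝ :=
  r ^ 2 * ∫ ω : Metric.sphere (0 : E3) 1,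
      (∑ i, F (r • (ω : E3)) i * (ω : E3) i) ∂((volume : Measure E3).toSphere)

/-- Eulerian variation `δF` (the `λ`-derivative at `λ = 0`) of a family of scalar fields. -/
noncomputable def dl (F : ℝ → E3 → ℝ) (x : E3) : ℝ := deriv (fun l => F l x) 0

/-- Lagrangian variation `ΔF := δF + ξ^j ∂_j F` of a family of scalar fields. -/
noncomputable def lagS (ξ : E3 → Fin 3 → ℝ) (F : ℝ → E3 → ℝ) (x : E3) : ℝ :=
  dl F x + ∑ j, ξ x j * pd j (F 0) x

/-- Lagrangian variation `Δv_i := δv_i + ξ^j ∂_j v_i + v_j ∂_i ξ^j` of the velocity. -/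
noncomputable def lagV (ξ : E3 → Fin 3 → ℝ) (v : ℝ → E3 → Fin 3 → ℝ) (i : Fin 3)
    (x : E3) : ℝ :=
  deriv (fun l => v l x i) 0 + (∑ j, ξ x j * pd j (fun y => v 0 y i) x)
    + ∑ j, v 0 x j * pd i (fun y => ξ y j) x

/-- `δρ + ∂_j(ρ ξ^j)`, the volume density of `Δ(ρ dV)`. -/
noncomputable def massVar (ξ : E3 → Fin 3 → ℝ) (ρ : ℝ → E3 → ℝ) (x : E3) : ℝ :=
  dl ρ x + ∑ j, pd j (fun y => ρ 0 y * ξ y j) x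

/-- The rotational vector field `φ(x) = (−x₂, x₁, 0)`. -/
noncomputable def phiRot (x : E3) : Fin 3 → ℝ := ![-(x 1), x 0, 0]

/- ======= auxiliary lemmas ======= -/

theorem pd_add' (i : Fin 3) {f g : E3 → ℝ} {x : E3} (hf : DifferentiableAt ℝ f x)
    (hg : DifferentiableAt ℝ g x) :
    pd i (fun y => f y + g y) x = pd i f x + pd i g x := by
  unfold pd; rw [fderiv_fun_add hf hg]; simp

theorem pd_mul' (i : Fin 3) {f g : E3 → ℝ} {x : E3} (hf : DifferentiableAt ℝ f x)
    (hg : DifferentiableAt ℝ g x) :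
    pd i (fun y => f y * g y) x = pd i f x * g x + f x * pd i g x := by
  unfold pd; rw [fderiv_fun_mul hf hg]; simp; ring

theorem pd_const_mul' (i : Fin 3) (c : ℝ) {f : E3 → ℝ} {x : E3}
    (hf : DifferentiableAt ℝ f x) :
    pd i (fun y => c * f y) x = c * pd i f x := by
  unfold pd; rw [fderiv_const_mul hf]; simp

theorem pd_sum' (i : Fin 3) {F : Fin 3 → E3 → ℝ} {x : E3}
    (hF : ∀ j, DifferentiableAt ℝ (F j) x) :
    pd i (fun y => ∑ j, F j y) x = ∑ j, pd i (F j) x := by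
  unfold pd; rw [fderiv_fun_sum (fun j _ => hF j)]; simp

theorem pd_sq' (i : Fin 3) {f : E3 → ℝ} {x : E3} (hf : DifferentiableAt ℝ f x) :
    pd i (fun y => f y ^ 2) x = 2 * f x * pd i f x := by
  have h : (fun y => f y ^ 2) = fun y => f y * f y := by funext y; ring
  rw [h, pd_mul' i hf hf]; ring

theorem pd_const' (i : Fin 3) (c : ℝ) (x : E3) : pd i (fun _ => c) x = 0 := by
  unfold pd; rw [fderiv_fun_const]; simp

theorem pd_continuous' (i : Fin 3) {f : E3 → ℝ} (hf : ContDiff ℝ (⊤ : ℕ∞) f) :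
    Continuous (pd i f) :=
  ((hf.fderiv_right (m := (⊤ : ℕ∞)) (by simp)).continuous.clm_apply continuous_const)

theorem slice_contDiff' {F : ℝ → E3 → ℝ} (hF : ContDiff ℝ (⊤ : ℕ∞) fun p : ℝ × E3 => F p.1 p.2)
    (l : ℝ) : ContDiff ℝ (⊤ : ℕ∞) (F l) :=
  hF.comp (contDiff_const.prodMk contDiff_id)

theorem time_hasDerivAt' {F : ℝ → E3 → ℝ} (hF : ContDiff ℝ (⊤ : ℕ∞) fun p : ℝ × E3 => F p.1 p.2)
    (x : E3) :
    HasDerivAt (fun l => F l x)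
      (fderiv ℝ (fun p : ℝ × E3 => F p.1 p.2) (0, x) (1, 0)) 0 := by
  have hc : HasDerivAt (fun l : ℝ => ((l, x) : ℝ × E3)) (1, 0) 0 :=
    (hasDerivAt_id (0:ℝ)).prodMk (hasDerivAt_const (0:ℝ) x)
  exact ((hF.differentiable (by simp) (0, x)).hasFDerivAt).comp_hasDerivAt 0 hc

theorem time_deriv_continuous' {F : ℝ → E3 → ℝ}
    (hF : ContDiff ℝ (⊤ : ℕ∞) fun p : ℝ × E3 => F p.1 p.2) :
    Continuous (fun x => deriv (fun l => F l x) 0) := by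
  have h : (fun x => deriv (fun l => F l x) 0)
      = fun x => fderiv ℝ (fun p : ℝ × E3 => F p.1 p.2) (0, x) (1, 0) := by
    funext x; exact (time_hasDerivAt' hF x).deriv
  rw [h]
  exact ((hF.fderiv_right (m := (⊤ : ℕ∞)) (by simp)).continuous.comp
    (continuous_const.prodMk continuous_id)).clm_apply continuous_const

theorem pi_integral_fderiv_single' (g : (Fin 3 → ℝ) → ℝ) (hg : ContDiff ℝ (⊤ : ℕ∞) g)
    (hgs : HasCompactSupport g) (i : Fin 3) :
    ∫ y : Fin 3 → ℝ, fderiv ℝ g y (Pi.single i 1) = 0 := by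
  obtain ⟨R, hR⟩ := hgs.isBounded.subset_closedBall 0
  have hR' : tsupport g ⊆ Metric.closedBall 0 |R| :=
    hR.trans (Metric.closedBall_subset_closedBall (le_abs_self R))
  have hout : ∀ y : Fin 3 → ℝ, |R| < ‖y‖ → y ∉ tsupport g := by
    intro y hy hmem
    have := hR' hmem
    rw [Metric.mem_closedBall, dist_zero_right] at this
    linarith
  set a : Fin 3 → ℝ := fun _ => -(|R| + 1) with ha
  set b : Fin 3 → ℝ := fun _ => (|R| + 1) with hb
  have hable : a ≤ b := fun j => by
    simp only [ha, hb]; linarith [abs_nonneg R]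
  have hvan : ∀ y : Fin 3 → ℝ, y ∉ Set.Icc a b → fderiv ℝ g y (Pi.single i 1) = 0 := by
    intro y hy
    have hns : y ∉ tsupport g := by
      apply hout
      rw [Set.mem_Icc] at hy
      push_neg at hy
      by_contra h
      push_neg at h
      apply hy
      · intro j
        have h1 := (abs_le.mp ((norm_le_pi_norm y j).trans h)).1
        simpa [ha] using by linarith
      · intro j
        have h2 := (abs_le.mp ((norm_le_pi_norm y j).trans h)).2
        simpa [hb] using by linarith
    have : fderiv ℝ g y = 0 := by
      by_contra h
      exact hns (support_fderiv_subset ℝ (by simpa using h))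
    simp [this]
  rw [← setIntegral_eq_integral_of_forall_compl_eq_zero (s := Set.Icc a b) hvan]
  have key := MeasureTheory.integral_divergence_of_hasFDerivAt_off_countable'
    (n := 2) a b hable
    (fun j y => if j = i then g y else 0)
    (fun j y => if j = i then fderiv ℝ g y else 0) ∅ Set.countable_empty
    (fun j => by
      by_cases h : j = i
      · simp only [h, if_pos rfl]; exact hg.continuous.continuousOn
      · simp only [h, if_neg h]; exact continuousOn_const)
    (fun y _ j => by
      by_cases h : j = i
      · simpa [h] using (hg.differentiable (by simp) y).hasFDerivAt
      · simpa [h] using hasFDerivAt_const (0:ℝ) y)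
    (by
      apply ContinuousOn.integrableOn_compact isCompact_Icc
      apply continuousOn_finset_sum
      intro j _
      by_cases h : j = i
      · simp only [h, if_pos rfl]
        exact ((hg.fderiv_right (m := (⊤ : ℕ∞)) (by simp)).continuous.clm_apply
          continuous_const).continuousOn
      · simp [h]
        exact continuousOn_const)
  have hsum : ∀ y : Fin 3 → ℝ,
      (∑ j, (if j = i then fderiv ℝ g y else 0) (Pi.single j 1)) =
        fderiv ℝ g y (Pi.single i 1) := by
    intro y
    rw [Finset.sum_eq_single i] <;> simp +contextual
  rw [show (∫ x in Set.Icc a b, fderiv ℝ g x (Pi.single i 1))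
      = ∫ x in Set.Icc a b, ∑ j, (if j = i then fderiv ℝ g x else 0) (Pi.single j 1) from
      by simp_rw [hsum], key]
  apply Finset.sum_eq_zero
  intro j _
  by_cases h : j = i
  · subst h
    have hz : ∀ (c : ℝ), |R| < |c| → ∀ x : Fin 2 → ℝ, g (j.insertNth c x) = 0 := by
      intro c hc x
      have hle : |c| ≤ ‖(j.insertNth c x : Fin 3 → ℝ)‖ := by
        have := norm_le_pi_norm (j.insertNth c x : Fin 3 → ℝ) j
        simpa [Fin.insertNth_apply_same] using this
      exact image_eq_zero_of_notMem_tsupport (hout _ (lt_of_lt_of_le hc hle))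
    have h1 : |R| < |b j| := by
      have hbj : b j = |R| + 1 := rfl
      rw [hbj, show |(|R| + 1)| = |R| + 1 from abs_of_nonneg (by positivity)]; linarith
    have h2 : |R| < |a j| := by
      have haj : a j = -(|R| + 1) := rfl
      rw [haj, abs_neg, show |(|R| + 1)| = |R| + 1 from abs_of_nonneg (by positivity)]; linarith
    simp only [eq_self_iff_true, if_true]
    rw [MeasureTheory.setIntegral_congr_fun measurableSet_Icc (fun x _ => hz _ h1 x),
        MeasureTheory.setIntegral_congr_fun measurableSet_Icc (fun x _ => hz _ h2 x)]
    simp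
  · simp [h]

theorem integral_pd_eq_zero' (f : E3 → ℝ) (hf : ContDiff ℝ (⊤ : ℕ∞) f)
    (hfs : HasCompactSupport f) (i : Fin 3) : ∫ x : E3, pd i f x = 0 := by
  set e := EuclideanSpace.equiv (Fin 3) ℝ with he
  set g : (Fin 3 → ℝ) → ℝ := fun y => f (e.symm y) with hg
  have hgC : ContDiff ℝ (⊤ : ℕ∞) g := hf.comp e.symm.contDiff
  have hgs : HasCompactSupport g :=
    HasCompactSupport.comp_homeomorph hfs e.symm.toHomeomorph
  have hpd : ∀ y : Fin 3 → ℝ, fderiv ℝ g y (Pi.single i 1) = pd i f (e.symm y) := by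
    intro y
    have h1 : HasFDerivAt g ((fderiv ℝ f (e.symm y)).comp (e.symm : (Fin 3 → ℝ) →L[ℝ] E3)) y :=
      ((hf.differentiable (by simp) _).hasFDerivAt).comp y e.symm.toContinuousLinearMap.hasFDerivAt
    rw [h1.fderiv]
    simp only [ContinuousLinearMap.coe_comp', Function.comp_apply]
    congr 1
  have hmp := (EuclideanSpace.volume_preserving_symm_measurableEquiv_toLp (Fin 3)).symm
  calc ∫ x : E3, pd i f x
      = ∫ y : Fin 3 → ℝ, pd i f ((MeasurableEquiv.toLp 2 (Fin 3 → ℝ)).symm.symm y) :=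
        (hmp.integral_comp (MeasurableEquiv.measurableEmbedding _) _).symm
    _ = ∫ y : Fin 3 → ℝ, fderiv ℝ g y (Pi.single i 1) :=
        integral_congr_ae (Filter.Eventually.of_forall fun y => ((hpd y).symm : _))
    _ = 0 := pi_integral_fderiv_single' g hgC hgs i

theorem pd_eq_zero_outside' {K : Set E3} (hKc : IsClosed K) {f : E3 → ℝ}
    (hz : ∀ x ∉ K, f x = 0) {x : E3} (hx : x ∉ K) (i : Fin 3) : pd i f x = 0 := by
  have hmem : Kᶜ ∈ 𝓝 x := hKc.isOpen_compl.mem_nhds hx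
  have hev : f =ᶠ[𝓝 x] (fun _ => (0:ℝ)) := Filter.eventually_of_mem hmem fun y hy => hz y hy
  unfold pd
  rw [hev.fderiv_eq, fderiv_fun_const]
  simp

theorem integrable_of_supported' {K : Set E3} (hK : IsCompact K) {f : E3 → ℝ}
    (hc : Continuous f) (hz : ∀ x ∉ K, f x = 0) : Integrable f :=
  hc.integrable_of_hasCompactSupport (HasCompactSupport.intro hK hz)

/-- Variation of the Newtonian kinetic energy (Eq. AdTN):
`δ∫ ½ρv² dV = ∫ ρ v^i Δv_i dV + ∫ ½|v|² (δρ + ∂_j(ρξ^j)) dV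
  + ∫ [ξ^j v_j ∂_i(ρ v^i) + ρ ξ^j v^i ∂_i v_j] dV`. -/
theorem newtonian_kinetic_energy_variation
    (ρ : ℝ → E3 → ℝ) (v : ℝ → E3 → Fin 3 → ℝ) (ξ : E3 → Fin 3 → ℝ)
    (hρC : ContDiff ℝ (⊤ : ℕ∞) fun p : ℝ × E3 => ρ p.1 p.2)
    (hvC : ∀ i, ContDiff ℝ (⊤ : ℕ∞) fun p : ℝ × E3 => v p.1 p.2 i)
    (hξC : ∀ i, ContDiff ℝ (⊤ : ℕ∞) fun x => ξ x i)
    -- ρ(λ) vanishes outside a fixed compact set for all λ in a neighborhood of 0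
    (K : Set E3) (hK : IsCompact K) (ε : ℝ) (hε : 0 < ε)
    (hsupp : ∀ l : ℝ, |l| < ε → ∀ x ∉ K, ρ l x = 0)
    -- differentiation under the integral sign at λ = 0 is justified
    (hDUI : HasDerivAt (fun l => ∫ x : E3, (1 / 2) * ρ l x * ∑ i, v l x i ^ 2)
      (∫ x : E3, deriv (fun l => (1 / 2) * ρ l x * ∑ i, v l x i ^ 2) 0) 0) :
    deriv (fun l => ∫ x : E3, (1 / 2) * ρ l x * ∑ i, v l x i ^ 2) 0
      = (∫ x : E3, ∑ i, ρ 0 x * v 0 x i * lagV ξ v i x)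
        + (∫ x : E3, (1 / 2) * (∑ i, v 0 x i ^ 2) * massVar ξ ρ x)
        + ∫ x : E3,
            (∑ j, ξ x j * v 0 x j * ∑ i, pd i (fun y => ρ 0 y * v 0 y i) x)
              + ∑ j, ∑ i, ρ 0 x * ξ x j * v 0 x i * pd i (fun y => v 0 y j) x := by
  have hρ0 : ContDiff ℝ (⊤ : ℕ∞) (ρ 0) := slice_contDiff' hρC 0
  have hv0 : ∀ i, ContDiff ℝ (⊤ : ℕ∞) (fun y => v 0 y i) :=
    fun i => slice_contDiff' (F := fun l y => v l y i) (hvC i) 0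
  have dρ0 : Differentiable ℝ (ρ 0) := hρ0.differentiable (by simp)
  have dv0 : ∀ i, Differentiable ℝ (fun y => v 0 y i) :=
    fun i => (hv0 i).differentiable (by simp)
  have dξ : ∀ i, Differentiable ℝ (fun y => ξ y i) :=
    fun i => (hξC i).differentiable (by simp)
  have hρ0z : ∀ x ∉ K, ρ 0 x = 0 := hsupp 0 (by simpa using hε)
  have hdlz : ∀ x ∉ K, dl ρ x = 0 := by
    intro x hx
    have hev : (fun l => ρ l x) =ᶠ[𝓝 (0:ℝ)] fun _ => 0 :=
      Filter.eventually_of_mem (Metric.ball_mem_nhds (0:ℝ) hε)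
        fun l hl => hsupp l (by simpa [Real.dist_eq] using hl) x hx
    unfold dl
    rw [hev.deriv_eq]; simp
  -- the vector field whose divergence accounts for the difference
  set W : Fin 3 → E3 → ℝ := fun i y =>
    ρ 0 y * ((∑ j, ξ y j * v 0 y j) * v 0 y i)
      + 1/2 * ((∑ j, v 0 y j ^ 2) * (ρ 0 y * ξ y i)) with hWdef
  have hWC : ∀ i, ContDiff ℝ (⊤ : ℕ∞) (W i) := fun i => by
    rw [hWdef]
    exact (hρ0.mul ((ContDiff.sum fun j _ => (hξC j).mul (hv0 j)).mul (hv0 i))).add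
      (contDiff_const.mul ((ContDiff.sum fun j _ => (hv0 j).pow 2).mul (hρ0.mul (hξC i))))
  have hWz : ∀ i, ∀ x ∉ K, W i x = 0 := fun i x hx => by
    simp [hWdef, hρ0z x hx]
  set fA : E3 → ℝ := fun x => ∑ i, ρ 0 x * v 0 x i * lagV ξ v i x with hfA
  set fB : E3 → ℝ := fun x => (1 / 2) * (∑ i, v 0 x i ^ 2) * massVar ξ ρ x with hfB
  set fC : E3 → ℝ := fun x =>
      (∑ j, ξ x j * v 0 x j * ∑ i, pd i (fun y => ρ 0 y * v 0 y i) x)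
        + ∑ j, ∑ i, ρ 0 x * ξ x j * v 0 x i * pd i (fun y => v 0 y j) x with hfC
  -- pointwise identity
  have hpoint : ∀ x : E3, deriv (fun l => (1 / 2) * ρ l x * ∑ i, v l x i ^ 2) 0
      = fA x + fB x + fC x - ∑ i, pd i (W i) x := by
    intro x
    simp only [hfA, hfB, hfC]
    have hρ' : HasDerivAt (fun l => ρ l x) (dl ρ x) 0 :=
      (time_hasDerivAt' hρC x).differentiableAt.hasDerivAt
    have hv' : ∀ i, HasDerivAt (fun l => v l x i) (deriv (fun l => v l x i) 0) 0 :=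
      fun i => (time_hasDerivAt' (F := fun l y => v l y i) (hvC i) x).differentiableAt.hasDerivAt
    have hD : HasDerivAt (fun l => (1 / 2) * ρ l x * ∑ i, v l x i ^ 2)
        ((1/2 * dl ρ x) * (∑ i, v 0 x i ^ 2)
          + (1/2 * ρ 0 x) * (∑ i, (2:ℕ) * v 0 x i ^ (2-1) * deriv (fun l => v l x i) 0)) 0 := by
      have h2 : HasDerivAt (fun l => ∑ i, v l x i ^ 2)
          (∑ i, (2:ℕ) * v 0 x i ^ (2-1) * deriv (fun l => v l x i) 0) 0 :=
        HasDerivAt.fun_sum fun i _ => (hv' i).pow 2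
      exact (hρ'.const_mul (1/2)).mul h2
    rw [hD.deriv]
    simp only [hWdef, lagV, massVar]
    simp (disch := fun_prop) only [pd_add', pd_mul', pd_const_mul', pd_sum', pd_sq', pd_const']
    simp only [Fin.sum_univ_three]
    push_cast
    ring
  -- continuity facts
  have clagV : ∀ i, Continuous (lagV ξ v i) := fun i => by
    have : Continuous fun x => deriv (fun l => v l x i) 0
        + (∑ j, ξ x j * pd j (fun y => v 0 y i) x)
        + ∑ j, v 0 x j * pd i (fun y => ξ y j) x :=
      ((time_deriv_continuous' (F := fun l y => v l y i) (hvC i)).add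
        (continuous_finset_sum _ fun j _ =>
          (hξC j).continuous.mul (pd_continuous' j (hv0 i)))).add
        (continuous_finset_sum _ fun j _ =>
          (hv0 j).continuous.mul (pd_continuous' i (hξC j)))
    exact this
  have cmass : Continuous (massVar ξ ρ) := by
    have : Continuous fun x => dl ρ x + ∑ j, pd j (fun y => ρ 0 y * ξ y j) x :=
      (time_deriv_continuous' hρC).add
        (continuous_finset_sum _ fun j _ => pd_continuous' j (hρ0.mul (hξC j)))
    exact this
  -- integrability of the four pieces
  have hAi : Integrable fA := by
    rw [hfA]
    refine integrable_of_supported' hK ?_ ?_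
    · exact continuous_finset_sum _ fun i _ =>
        (hρ0.continuous.mul (hv0 i).continuous).mul (clagV i)
    · intro x hx
      exact Finset.sum_eq_zero fun i _ => by simp [hρ0z x hx]
  have hBi : Integrable fB := by
    rw [hfB]
    refine integrable_of_supported' hK ?_ ?_
    · exact (continuous_const.mul
        (continuous_finset_sum _ fun i _ => (hv0 i).continuous.pow 2)).mul cmass
    · intro x hx
      have : massVar ξ ρ x = 0 := by
        unfold massVar
        rw [hdlz x hx]
        rw [Finset.sum_eq_zero fun j _ =>
          pd_eq_zero_outside' hK.isClosed (fun y hy => by simp [hρ0z y hy]) hx j]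
        simp
      simp [this]
  have hCi : Integrable fC := by
    rw [hfC]
    refine integrable_of_supported' hK ?_ ?_
    · exact (continuous_finset_sum _ fun j _ =>
        ((hξC j).continuous.mul (hv0 j).continuous).mul
          (continuous_finset_sum _ fun i _ => pd_continuous' i (hρ0.mul (hv0 i)))).add
        (continuous_finset_sum _ fun j _ => continuous_finset_sum _ fun i _ =>
          ((hρ0.continuous.mul (hξC j).continuous).mul (hv0 i).continuous).mul
            (pd_continuous' i (hv0 j)))
    · intro x hx
      rw [Finset.sum_eq_zero fun j _ => by
        rw [Finset.sum_eq_zero fun i _ =>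
          pd_eq_zero_outside' hK.isClosed (fun y hy => by simp [hρ0z y hy]) hx i]
        simp,
        Finset.sum_eq_zero fun j _ => Finset.sum_eq_zero fun i _ => by simp [hρ0z x hx]]
      simp
  have hWi : ∀ i, Integrable (fun x : E3 => pd i (W i) x) := fun i => by
    refine integrable_of_supported' hK (pd_continuous' i (hWC i)) ?_
    intro x hx
    exact pd_eq_zero_outside' hK.isClosed (hWz i) hx i
  have hdivW : (∫ x : E3, ∑ i, pd i (W i) x) = 0 := by
    rw [integral_finset_sum _ fun i _ => hWi i]
    exact Finset.sum_eq_zero fun i _ =>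
      integral_pd_eq_zero' (W i) (hWC i) (HasCompactSupport.intro hK (hWz i)) i
  have hABC : Integrable (fun x => fA x + fB x + fC x) volume := (hAi.add hBi).add hCi
  have hAB : Integrable (fun x => fA x + fB x) volume := hAi.add hBi
  have hWsum : Integrable (fun x : E3 => ∑ i, pd i (W i) x) volume :=
    integrable_finset_sum _ fun i _ => hWi i
  have e1 : (∫ x : E3, (fA x + fB x + fC x - ∑ i, pd i (W i) x))
      = (∫ x : E3, (fA x + fB x + fC x)) - ∫ x : E3, ∑ i, pd i (W i) x :=
    integral_sub hABC hWsum
  have e2 : (∫ x : E3, (fA x + fB x + fC x)) = (∫ x : E3, (fA x + fB x)) + ∫ x : E3, fC x :=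
    integral_add hAB hCi
  have e3 : (∫ x : E3, (fA x + fB x)) = (∫ x : E3, fA x) + ∫ x : E3, fB x :=
    integral_add hAi hBi
  rw [hDUI.deriv]
  rw [integral_congr_ae (Filter.Eventually.of_forall hpoint)]
  rw [e1, e2, e3, hdivW, sub_zero]
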